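/- Let P be a row-stochastic matrix on a finite set S and let C be a closed communicating class of P. Then there exists exactly one stationary distribution π of P with π(i) = 0 for all i ∉ C, and this π moreover satisfies π(i) > 0 for all i ∈ C. -/

import Mathlib

open Filter Topology

/-- A matrix is row-stochastic: nonnegative entries and each row sums to 1. -/
def RowStochastic {S : Type*} [Fintype S] (P : Matrix S S ℝ) : Prop :=
  (∀ i j, 0 ≤ P i j) ∧ ∀ i, ∑ j, P i j = 1

/-- A probability row vector `π` is a stationary distribution of `P`. -/
def StationaryDist {S : Type*} [Fintype S] (P : Matrix S S ℝ) (π : S → ℝ) : Prop :=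
  (∀ i, 0 ≤ π i) ∧ (∑ i, π i = 1) ∧ ∀ j, ∑ i, π i * P i j = π j

/-- A closed communicating class: a nonempty set which no transition leaves, and
within which every state leads to every other in some number `k ≥ 1` of steps. -/
def ClosedClass {S : Type*} [Fintype S] [DecidableEq S] (P : Matrix S S ℝ) (C : Set S) : Prop :=
  C.Nonempty ∧ (∀ i ∈ C, ∀ j, j ∉ C → P i j = 0) ∧
    ∀ i ∈ C, ∀ j ∈ C, ∃ k, 1 ≤ k ∧ 0 < (P ^ k) i j

/-!
Restricted to the closed class `C`, `P` is row-stochastic, so `1` is a right eigenvector for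
the eigenvalue `1` and there is a nonzero left one; extended by zero it is invariant for `P`.
Since `P` is nonnegative and preserves total mass, the pointwise maximum of two invariant
vectors is subinvariant, hence invariant. This turns the invariant vector `x` into `|x|`,
which normalises to a stationary distribution. A nonnegative invariant vector that is
positive at one state of `C` is positive at every state reachable from it, i.e. on all of `C`.
For uniqueness, the difference `d` of two stationary distributions supported on `C` has total
mass `0`; were it positive somewhere, `d ⊔ 0` would be positive on all of `C`, forcing
`d ≥ 0` and positive mass.
-/

open Matrix

namespace Matrix

theorem exists_vecMul_eq_self_of_mulVec_eq_self {n K : Type*} [Fintype n] [DecidableEq n]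
    [Field K] {M : Matrix n n K} {v : n → K} (hv : v ≠ 0) (hMv : M *ᵥ v = v) :
    ∃ w ≠ 0, w ᵥ* M = w := by
  have hdet : (M - 1).det = 0 :=
    exists_mulVec_eq_zero_iff.1 ⟨v, hv, by rw [sub_mulVec, one_mulVec, hMv, sub_self]⟩
  obtain ⟨w, hw, hwM⟩ := exists_vecMul_eq_zero_iff.2 hdet
  exact ⟨w, hw, by rwa [vecMul_sub, vecMul_one, sub_eq_zero] at hwM⟩

theorem vecMul_pow_eq_self {n R : Type*} [Fintype n] [DecidableEq n] [Semiring R]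
    {M : Matrix n n R} {x : n → R} (hx : x ᵥ* M = x) (k : ℕ) : x ᵥ* M ^ k = x := by
  induction k with
  | zero => rw [pow_zero, vecMul_one]
  | succ k ih => rw [pow_succ, ← vecMul_vecMul, ih, hx]

variable {n R : Type*} [Fintype n] [DecidableEq n] [Ring R] [LinearOrder R] [IsOrderedRing R]
  {M : Matrix n n R} {x y : n → R}

theorem vecMul_eq_self_of_le_vecMul (hM : M ∈ rowStochastic R n) (h : x ≤ x ᵥ* M) :
    x ᵥ* M = x := by
  have hsum : ∑ i, x i = ∑ i, (x ᵥ* M) i := by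
    rw [← dotProduct_one, ← dotProduct_one, ← dotProduct_mulVec, hM.2]
  exact funext fun j =>
    ((Finset.sum_eq_sum_iff_of_le fun i _ => h i).1 hsum j (Finset.mem_univ j)).symm

theorem sup_vecMul_eq_self (hM : M ∈ rowStochastic R n) (hx : x ᵥ* M = x) (hy : y ᵥ* M = y) :
    (x ⊔ y) ᵥ* M = x ⊔ y := by
  have mono : Monotone (· ᵥ* M) := fun u v huv j =>
    Finset.sum_le_sum fun i _ => mul_le_mul_of_nonneg_right (huv i) (hM.1 i j)
  refine vecMul_eq_self_of_le_vecMul hM (sup_le ?_ ?_)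
  · exact hx.ge.trans (mono le_sup_left)
  · exact hy.ge.trans (mono le_sup_right)

end Matrix

theorem RowStochastic.mem_rowStochastic {S : Type*} [Fintype S] [DecidableEq S]
    {P : Matrix S S ℝ} (hP : RowStochastic P) : P ∈ rowStochastic ℝ S :=
  mem_rowStochastic_iff_sum.2 hP

theorem StationaryDist.vecMul_eq_self {S : Type*} [Fintype S] {P : Matrix S S ℝ} {π : S → ℝ}
    (h : StationaryDist P π) : π ᵥ* P = π :=
  funext h.2.2

namespace ClosedClass

variable {S : Type*} [Fintype S] [DecidableEq S] {P : Matrix S S ℝ} {C : Set S}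

theorem exists_vecMul_eq_self (hP : P ∈ rowStochastic ℝ S) (hC : ClosedClass P C) :
    ∃ x ≠ 0, (∀ i ∉ C, x i = 0) ∧ x ᵥ* P = x := by
  classical
  have : Nonempty C := hC.1.to_subtype
  have sum_subtype {f : S → ℝ} (hf : ∀ i ∉ C, f i = 0) : ∑ i : C, f i = ∑ i, f i := by
    rw [← Fintype.sum_subtype_add_sum_subtype (· ∈ C) f,
      Fintype.sum_eq_zero (fun i : {i // i ∉ C} => f i) fun i => hf i i.2, add_zero]
  let Q : Matrix C C ℝ := P.submatrix (↑) (↑)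
  have hQ : Q *ᵥ 1 = 1 := funext fun i => by
    simpa [Q, mulVec, dotProduct, sum_subtype (hC.2.1 i i.2)]
      using sum_row_of_mem_rowStochastic hP i
  obtain ⟨w, hw, hwQ⟩ := exists_vecMul_eq_self_of_mulVec_eq_self one_ne_zero hQ
  let x : S → ℝ := fun s => if h : s ∈ C then w ⟨s, h⟩ else 0
  have hxC : ∀ i ∉ C, x i = 0 := fun i hi => dif_neg hi
  have hxP : ∀ j, (x ᵥ* P) j = ∑ i : C, w i * P i j := fun j => by
    rw [vecMul, dotProduct, ← sum_subtype fun i hi => by rw [hxC i hi, zero_mul]]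
    simp [x]
  refine ⟨x, ?_, hxC, funext fun j => ?_⟩
  · obtain ⟨i, hi⟩ := Function.ne_iff.1 hw
    exact Function.ne_iff.2 ⟨i, by simpa [x] using hi⟩
  · rw [hxP]
    by_cases hj : j ∈ C
    · rw [show x j = w ⟨j, hj⟩ from dif_pos hj, ← congrFun hwQ ⟨j, hj⟩]
      rfl
    · rw [hxC j hj]
      exact Finset.sum_eq_zero fun i _ => by rw [hC.2.1 i i.2 j hj, mul_zero]

theorem pos_of_vecMul_eq_self (hP : P ∈ rowStochastic ℝ S) (hC : ClosedClass P C) {x : S → ℝ}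
    (hx0 : 0 ≤ x) (hx : x ≠ 0) (hxC : ∀ i ∉ C, x i = 0) (hxP : x ᵥ* P = x) :
    ∀ j ∈ C, 0 < x j := by
  obtain ⟨i, hi⟩ := Function.ne_iff.1 hx
  have hiC : i ∈ C := by_contra fun h => hi (hxC i h)
  intro j hj
  obtain ⟨k, -, hk⟩ := hC.2.2 i hiC j hj
  calc 0 < x i * (P ^ k) i j := mul_pos ((hx0 i).lt_of_ne' hi) hk
    _ ≤ (x ᵥ* P ^ k) j :=
      Finset.single_le_sum (fun l _ => mul_nonneg (hx0 l) ((pow_mem hP k).1 l j))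
        (Finset.mem_univ i)
    _ = x j := by rw [vecMul_pow_eq_self hxP]

theorem eq_zero_of_vecMul_eq_self (hP : P ∈ rowStochastic ℝ S) (hC : ClosedClass P C)
    {x : S → ℝ} (hxC : ∀ i ∉ C, x i = 0) (hxP : x ᵥ* P = x) (hsum : ∑ i, x i = 0) :
    x = 0 := by
  suffices hx : x ≤ 0 from
    funext fun i =>
      (Finset.sum_eq_zero_iff_of_nonpos fun i _ => hx i).1 hsum i (Finset.mem_univ i)
  intro i
  by_contra! hi
  have hpos : ∀ j ∈ C, 0 < (x ⊔ 0) j := by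
    refine hC.pos_of_vecMul_eq_self hP le_sup_right ?_ (fun j hj => by simp [hxC j hj])
      (sup_vecMul_eq_self hP hxP (zero_vecMul P))
    exact Function.ne_iff.2 ⟨i, by simpa using hi⟩
  have hx0 : ∀ j, 0 ≤ x j := fun j => by
    by_cases hj : j ∈ C
    · exact le_of_lt (by simpa using hpos j hj)
    · exact (hxC j hj).ge
  have := Finset.sum_pos' (fun j _ => hx0 j) ⟨i, Finset.mem_univ i, hi⟩
  linarith

theorem exists_stationaryDist (hP : P ∈ rowStochastic ℝ S) (hC : ClosedClass P C) :
    ∃ π, StationaryDist P π ∧ ∀ i ∉ C, π i = 0 := by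
  obtain ⟨x, hx, hxC, hxP⟩ := hC.exists_vecMul_eq_self hP
  have habsP : |x| ᵥ* P = |x| := sup_vecMul_eq_self hP hxP (by rw [neg_vecMul, hxP])
  have hsum : 0 < ∑ i, |x i| := by
    obtain ⟨i, hi⟩ := Function.ne_iff.1 hx
    exact Finset.sum_pos' (fun j _ => abs_nonneg _) ⟨i, Finset.mem_univ i, abs_pos.2 hi⟩
  refine ⟨(∑ i, |x i|)⁻¹ • |x|, ⟨fun i => ?_, ?_, fun j => ?_⟩, fun i hi => by simp [hxC i hi]⟩
  · simp only [Pi.smul_apply, Pi.abs_apply, smul_eq_mul]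
    positivity
  · simp [← Finset.mul_sum, hsum.ne']
  · exact congrFun (by rw [smul_vecMul, habsP] : ((∑ i, |x i|)⁻¹ • |x|) ᵥ* P = _) j

end ClosedClass

theorem unique_stationary_on_closed_class
    {S : Type*} [Fintype S] [DecidableEq S]
    (P : Matrix S S ℝ) (hP : RowStochastic P)
    (C : Set S) (hC : ClosedClass P C) :
    ∃ π : S → ℝ, (StationaryDist P π ∧ ∀ i ∉ C, π i = 0) ∧
      (∀ i ∈ C, 0 < π i) ∧
      ∀ π' : S → ℝ, StationaryDist P π' ∧ (∀ i ∉ C, π' i = 0) → π' = π := by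
  have hP' := hP.mem_rowStochastic
  obtain ⟨π, hπ, hπC⟩ := hC.exists_stationaryDist hP'
  refine ⟨π, ⟨hπ, hπC⟩, hC.pos_of_vecMul_eq_self hP' hπ.1 ?_ hπC hπ.vecMul_eq_self, ?_⟩
  · rintro rfl
    simpa using hπ.2.1
  · rintro π' ⟨hπ', hπ'C⟩
    refine sub_eq_zero.1 (hC.eq_zero_of_vecMul_eq_self hP'
      (fun i hi => by simp [hπC i hi, hπ'C i hi]) ?_ ?_)
    · rw [sub_vecMul, hπ.vecMul_eq_self, hπ'.vecMul_eq_self]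
    · simp [Finset.sum_sub_distrib, hπ.2.1, hπ'.2.1]
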